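/- Let S ⊆ E^n with 0̄ ∈ S, a = χ^S, and suppose there exists k such that B'_i(a) = 0 for every i ∉ {0, k}. Then χ^S is a perfect 2-coloring of E^n (i.e., there exists a matrix of parameters for which χ^S is a perfect coloring). -/

import Mathlib

open Finset

/-- Weight of a vector in the Boolean cube: the number of ones. -/
def wt {n : ℕ} (y : Fin n → Bool) : ℕ := (Finset.univ.filter fun i => y i = true).card

/-- The face `E^n_y(z) = {x : [x,y] = [z,y]}`: all `x` agreeing with `z` on the
support of `y`. -/
def face {n : ℕ} (y z : Fin n → Bool) : Finset (Fin n → Bool) :=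
  Finset.univ.filter fun x => ∀ i, y i = true → x i = z i

/-- `χ^S` is correlation-immune of order `k`: all faces obtained by fixing `k`
coordinates (i.e. faces `E^n_y(z)` with `wt y = k`) intersect `S` in the same
cardinality. -/
def CorrImmune {n : ℕ} (S : Finset (Fin n → Bool)) (k : ℕ) : Prop :=
  ∀ y₁ z₁ y₂ z₂ : Fin n → Bool, wt y₁ = k → wt y₂ = k →
    (face y₁ z₁ ∩ S).card = (face y₂ z₂ ∩ S).card

/-- `cor S` : the maximum order of correlation immunity of `χ^S`. -/
noncomputable def cor {n : ℕ} (S : Finset (Fin n → Bool)) : ℕ :=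
  sSup {k | k ≤ n ∧ CorrImmune S k}

/-- Density `ρ(S) = |S| / 2^n`. -/
def rho {n : ℕ} (S : Finset (Fin n → Bool)) : ℚ := (S.card : ℚ) / 2 ^ n

/-- `nei S`: the average number of neighbors in `S` of vertices of `S`,
`(1/|S|) ∑_{x∈S} |B(x) ∩ S| - 1`, where `B x` is the Hamming ball of radius 1. -/
def nei {n : ℕ} (S : Finset (Fin n → Bool)) : ℚ :=
  (∑ x ∈ S, ((S.filter fun y => hammingDist x y ≤ 1).card : ℚ)) / (S.card : ℚ) - 1

/-- Characteristic function of `S`, as a rational-valued function. -/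
def chi {n : ℕ} (S : Finset (Fin n → Bool)) (x : Fin n → Bool) : ℚ := if x ∈ S then 1 else 0

/-- Characteristic function of `S` as a 2-coloring (color 1 = membership in `S`). -/
def chiCol {n : ℕ} (S : Finset (Fin n → Bool)) (x : Fin n → Bool) : Fin 2 :=
  if x ∈ S then 1 else 0

/-- `Col` is a perfect coloring with parameter matrix `A`: every vertex of color `i`
has exactly `A i j` neighbors (at Hamming distance 1) of color `j`. -/
def IsPerfectColoring {n : ℕ} (Col : (Fin n → Bool) → Fin 2) (A : Fin 2 → Fin 2 → ℕ) : Prop :=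
  ∀ x : Fin n → Bool, ∀ j : Fin 2,
    (Finset.univ.filter fun y => hammingDist x y = 1 ∧ Col y = j).card = A (Col x) j

/-- Fourier transform `â(v) = ∑_u a(u) (-1)^{⟨u,v⟩}`. -/
def fourierT {n : ℕ} (a : (Fin n → Bool) → ℚ) (v : Fin n → Bool) : ℚ :=
  ∑ u : Fin n → Bool, a u * (-1) ^ ((Finset.univ.filter fun i => u i = true ∧ v i = true).card)

/-- Coordinatewise XOR. -/
def xorv {n : ℕ} (u v : Fin n → Bool) : Fin n → Bool := fun i => xor (u i) (v i)

/-- Weight distribution `B_i(a) = (1/|S|) |{(u,v) ∈ S×S : wt(u⊕v) = i}|`. -/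
def Bdist {n : ℕ} (S : Finset (Fin n → Bool)) (i : ℕ) : ℚ :=
  (((S ×ˢ S).filter fun p => wt (xorv p.1 p.2) = i).card : ℚ) / (S.card : ℚ)

/-- Kravchuk polynomial `P_k(i) = ∑_{j=0}^k (-1)^j C(i,j) C(n-i,k-j)`. -/
def krav (n k i : ℕ) : ℚ :=
  ∑ j ∈ Finset.range (k + 1),
    (-1 : ℚ) ^ j * (Nat.choose i j : ℚ) * (Nat.choose (n - i) (k - j) : ℚ)

/-- MacWilliams transform `B'_k(a) = (1/|S|) ∑_{i=0}^n B_i(a) P_k(i)`. -/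
def Bmw {n : ℕ} (S : Finset (Fin n → Bool)) (k : ℕ) : ℚ :=
  (∑ i ∈ Finset.range (n + 1), Bdist S i * krav n k i) / (S.card : ℚ)

/-!
The Walsh characters `walsh u` diagonalize the adjacency operator of the cube: summing
`walsh · t` over the neighbours of `x` gives `(n - 2 wt t) • walsh x t`. The generating function
`∑ t, walsh w t X ^ wt t = (1 - X) ^ wt w * (1 + X) ^ (n - wt w)` identifies `P_K(wt w)` with
`∑_{wt t = K} walsh w t`, which turns the MacWilliams transform into
`B'_K = ∑_{wt t = K} χ̂_S(t)² / |S|²`. So the hypothesis says that `χ̂_S` is supported on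
`{0̄} ∪ {t : wt t = k}`, i.e. `χ_S` is, up to a constant, an eigenfunction of the adjacency
operator with eigenvalue `n - 2k`. Hence the number of neighbours of `x` in `S` is an affine
function of `χ_S(x)`, so it depends only on the colour of `x`.
-/

namespace BooleanCube

open Function

variable {n : ℕ}

lemma wt_le (t : Fin n → Bool) : wt t ≤ n :=
  (card_filter_le _ _).trans_eq (by simp)

lemma wt_eq_zero_iff {t : Fin n → Bool} : wt t = 0 ↔ t = fun _ => false := by
  simp [wt, filter_eq_empty_iff, funext_iff]

def walsh (u v : Fin n → Bool) : ℚ := (-1) ^ #{i | u i = true ∧ v i = true}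

lemma fourierT_eq_sum_walsh (a : (Fin n → Bool) → ℚ) (v : Fin n → Bool) :
    fourierT a v = ∑ u, a u * walsh u v := rfl

lemma walsh_eq_prod (u v : Fin n → Bool) :
    walsh u v = ∏ i, if u i = true ∧ v i = true then -1 else 1 := by
  rw [walsh, ← prod_const, prod_filter]

lemma walsh_zero_right (u : Fin n → Bool) : walsh u (fun _ => false) = 1 := by
  simp [walsh_eq_prod]

lemma walsh_xorv_left (u v t : Fin n → Bool) :
    walsh (xorv u v) t = walsh u t * walsh v t := by
  simp only [walsh_eq_prod, ← prod_mul_distrib, xorv]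
  refine prod_congr rfl fun i _ => ?_
  by_cases hu : u i <;> by_cases hv : v i <;> by_cases ht : t i <;> simp [hu, hv, ht]

lemma sum_walsh (w : Fin n → Bool) :
    ∑ t, walsh w t = if w = (fun _ => false) then 2 ^ n else 0 := by
  simp only [walsh_eq_prod]
  rw [← Fintype.prod_sum (fun i (b : Bool) => if w i = true ∧ b = true then (-1 : ℚ) else 1)]
  simp only [Fintype.sum_bool]
  split_ifs with hw
  · simp [hw, one_add_one_eq_two]
  · obtain ⟨i, hi⟩ : ∃ i, w i = true := by
      by_contra! h
      exact hw (funext fun i => by simpa using h i)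
    exact prod_eq_zero (mem_univ i) (by simp [hi])

lemma xorv_eq_zero_iff {u v : Fin n → Bool} : xorv u v = (fun _ => false) ↔ u = v := by
  simp [funext_iff, xorv]

lemma sum_walsh_mul_walsh (u v : Fin n → Bool) :
    ∑ t, walsh u t * walsh v t = if u = v then 2 ^ n else 0 := by
  simp only [← walsh_xorv_left, sum_walsh, xorv_eq_zero_iff]

lemma sum_fourierT_mul_walsh (a : (Fin n → Bool) → ℚ) (x : Fin n → Bool) :
    ∑ t, fourierT a t * walsh x t = 2 ^ n * a x := by
  simp only [fourierT_eq_sum_walsh, sum_mul, mul_assoc]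
  rw [sum_comm]
  simp only [← mul_sum, sum_walsh_mul_walsh, mul_ite, mul_zero, sum_ite_eq', mem_univ, if_true]
  ring

section Kravchuk

open Polynomial

lemma coeff_one_sub_X_pow (m j : ℕ) :
    ((1 - X : ℚ[X]) ^ m).coeff j = (-1) ^ j * m.choose j := by
  induction m generalizing j with
  | zero => cases j <;> simp [coeff_one]
  | succ m ih =>
    rw [pow_succ, mul_sub, mul_one, coeff_sub]
    cases j with
    | zero => simp [ih]
    | succ j => rw [coeff_mul_X, ih, ih, Nat.choose_succ_succ']; push_cast; ring

lemma krav_eq_coeff (n K i : ℕ) :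
    krav n K i = ((1 - X : ℚ[X]) ^ i * (1 + X) ^ (n - i)).coeff K := by
  rw [coeff_mul, Finset.Nat.sum_antidiagonal_eq_sum_range_succ
    (fun a b => ((1 - X : ℚ[X]) ^ i).coeff a * ((1 + X) ^ (n - i)).coeff b)]
  simp only [krav, coeff_one_sub_X_pow, coeff_one_add_X_pow]

lemma C_walsh_mul_X_pow_wt (w t : Fin n → Bool) :
    C (walsh w t) * X ^ wt t
      = ∏ i, if t i = true then C (if w i = true then -1 else 1) * X else 1 := by
  rw [walsh_eq_prod, wt, ← prod_const, prod_filter, map_prod, ← prod_mul_distrib]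
  refine prod_congr rfl fun i _ => ?_
  by_cases hw : w i <;> by_cases ht : t i <;> simp [hw, ht]

lemma sum_C_walsh_mul_X_pow_wt (w : Fin n → Bool) :
    ∑ t, C (walsh w t) * X ^ wt t = (1 - X) ^ wt w * (1 + X) ^ (n - wt w) := by
  simp only [C_walsh_mul_X_pow_wt]
  rw [← Fintype.prod_sum (fun i (b : Bool) =>
    if b = true then C (if w i = true then -1 else 1) * X else (1 : ℚ[X]))]
  have hfactor : ∀ i, ∑ b : Bool, (if b = true then C (if w i = true then -1 else 1) * X else 1)
      = if w i = true then 1 - X else (1 + X : ℚ[X]) := by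
    intro i; by_cases hw : w i <;> simp [hw, add_comm, sub_eq_add_neg]
  rw [prod_congr rfl fun i _ => hfactor i, prod_ite, prod_const, prod_const, wt,
    filter_not, card_sdiff_of_subset (filter_subset _ _), card_univ, Fintype.card_fin]

lemma krav_wt_eq_sum_walsh (K : ℕ) (w : Fin n → Bool) :
    krav n K (wt w) = ∑ t with wt t = K, walsh w t := by
  rw [krav_eq_coeff, ← sum_C_walsh_mul_X_pow_wt, finsetSum_coeff, sum_filter]
  simp only [coeff_C_mul_X_pow, eq_comm]

end Kravchuk

lemma fourierT_chi (S : Finset (Fin n → Bool)) (t : Fin n → Bool) :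
    fourierT (chi S) t = ∑ u ∈ S, walsh u t := by
  simp [fourierT_eq_sum_walsh, chi, ite_mul, sum_ite_mem]

lemma sum_card_mul_krav (S : Finset (Fin n → Bool)) (K : ℕ) :
    ∑ i ∈ range (n + 1), (#{p ∈ S ×ˢ S | wt (xorv p.1 p.2) = i} : ℚ) * krav n K i
      = ∑ p ∈ S ×ˢ S, krav n K (wt (xorv p.1 p.2)) := by
  rw [← sum_fiberwise_of_maps_to (t := range (n + 1))
    (g := fun p : (Fin n → Bool) × (Fin n → Bool) => wt (xorv p.1 p.2))
    fun p _ => mem_range.2 (Nat.lt_succ_of_le (wt_le _))]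
  refine sum_congr rfl fun i _ => ?_
  rw [sum_congr rfl fun p hp => by rw [(mem_filter.1 hp).2], sum_const, nsmul_eq_mul]

lemma Bmw_eq_sum_sq_fourierT (S : Finset (Fin n → Bool)) (K : ℕ) :
    Bmw S K = (∑ t with wt t = K, fourierT (chi S) t ^ 2) / #S ^ 2 := by
  calc Bmw S K
      = (∑ i ∈ range (n + 1), (#{p ∈ S ×ˢ S | wt (xorv p.1 p.2) = i} : ℚ) * krav n K i)
          / #S ^ 2 := by
        simp only [Bmw, Bdist, div_mul_eq_mul_div, ← sum_div, div_div, sq]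
    _ = (∑ t with wt t = K, fourierT (chi S) t ^ 2) / #S ^ 2 := by
        rw [sum_card_mul_krav]
        simp only [krav_wt_eq_sum_walsh, walsh_xorv_left, fourierT_chi, sq, sum_mul_sum]
        rw [sum_comm]
        simp only [sum_product]

lemma fourierT_chi_eq_zero_of_Bmw_eq_zero {S : Finset (Fin n → Bool)} {t : Fin n → Bool}
    (hB : Bmw S (wt t) = 0) : fourierT (chi S) t = 0 := by
  rw [Bmw_eq_sum_sq_fourierT, div_eq_zero_iff] at hB
  rcases hB with hsum | hS
  · exact pow_eq_zero_iff two_ne_zero |>.1 <|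
      (sum_eq_zero_iff_of_nonneg fun _ _ => sq_nonneg _).1 hsum t (by simp)
  · obtain rfl : S = ∅ := by simpa using hS
    simp [fourierT_chi]

lemma hammingDist_eq_one_iff {x y : Fin n → Bool} :
    hammingDist x y = 1 ↔ ∃ i, y = update x i (!x i) := by
  rw [hammingDist, card_eq_one]
  refine exists_congr fun i => ⟨fun h => funext fun j => ?_, ?_⟩
  · have hj := congrArg (j ∈ ·) h
    by_cases hji : j = i
    · subst hji; simpa [Bool.eq_not_iff, eq_comm] using hj
    · simpa [hji, eq_comm] using hj
  · rintro rfl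
    ext j
    by_cases hji : j = i <;> simp [hji]

lemma sum_hammingDist_eq_one {M : Type*} [AddCommMonoid M] (x : Fin n → Bool)
    (f : (Fin n → Bool) → M) :
    ∑ y with hammingDist x y = 1, f y = ∑ i, f (update x i (!x i)) := by
  have himage :
      ({y | hammingDist x y = 1} : Finset _) = univ.image fun i => update x i (!x i) := by
    ext y
    simp only [mem_filter, mem_univ, true_and, hammingDist_eq_one_iff, mem_image]
    exact exists_congr fun _ => eq_comm
  rw [himage, sum_image fun i _ j _ hij => ?_]
  by_contra hne
  simpa [update_of_ne hne] using congrFun hij i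

lemma update_not_eq_xorv (x : Fin n → Bool) (i : Fin n) :
    update x i (!x i) = xorv x fun j => decide (j = i) := by
  ext j
  by_cases hji : j = i <;> simp [xorv, hji]

lemma walsh_single_left (i : Fin n) (t : Fin n → Bool) :
    walsh (fun j => decide (j = i)) t = if t i = true then -1 else 1 := by
  rw [walsh_eq_prod, Fintype.prod_eq_single i fun j hj => by simp [hj]]
  simp

lemma sum_walsh_update_not (x t : Fin n → Bool) :
    ∑ i, walsh (update x i (!x i)) t = (n - 2 * wt t) * walsh x t := by
  have hsign : ∀ i,
      (if t i = true then (-1 : ℚ) else 1) = 1 - 2 * if t i = true then 1 else 0 := by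
    intro i; split_ifs <;> norm_num
  simp only [update_not_eq_xorv, walsh_xorv_left, walsh_single_left, ← mul_sum, hsign,
    sum_sub_distrib, sum_boole]
  simp [wt, mul_comm]

lemma two_pow_mul_sum_update_not {a : (Fin n → Bool) → ℚ} {k : ℕ}
    (ha : ∀ t, t ≠ (fun _ => false) → wt t ≠ k → fourierT a t = 0) (x : Fin n → Bool) :
    2 ^ n * ∑ i, a (update x i (!x i))
      = (n - 2 * k) * (2 ^ n * a x) + 2 * k * fourierT a (fun _ => false) := by
  have hspec : ∀ t, fourierT a t * (n - 2 * wt t)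
      = fourierT a t * (n - 2 * k)
        + if t = (fun _ => false) then 2 * k * fourierT a t else 0 := by
    intro t
    by_cases h0 : t = fun _ => false
    · simp [h0, wt_eq_zero_iff.2 rfl]; ring
    · by_cases hk : wt t = k
      · simp [h0, hk]
      · simp [h0, ha t h0 hk]
  calc 2 ^ n * ∑ i, a (update x i (!x i))
      = ∑ t, fourierT a t * ((n - 2 * wt t) * walsh x t) := by
        simp only [mul_sum, ← sum_fourierT_mul_walsh, ← sum_walsh_update_not]
        rw [sum_comm]
    _ = ∑ t, ((n - 2 * k) * (fourierT a t * walsh x t)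
          + if t = (fun _ => false) then 2 * k * fourierT a t * walsh x t else 0) :=
        sum_congr rfl fun t _ => by rw [← mul_assoc, hspec, add_mul, ite_mul, zero_mul]; ring
    _ = (n - 2 * k) * ∑ t, fourierT a t * walsh x t + 2 * k * fourierT a (fun _ => false) := by
        rw [sum_add_distrib, ← mul_sum, sum_ite_eq', if_pos (mem_univ _), walsh_zero_right,
          mul_one]
    _ = (n - 2 * k) * (2 ^ n * a x) + 2 * k * fourierT a (fun _ => false) := by
        rw [sum_fourierT_mul_walsh]

lemma sum_update_not_eq_of_fourierT_eq_zero {a : (Fin n → Bool) → ℚ} {k : ℕ}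
    (ha : ∀ t, t ≠ (fun _ => false) → wt t ≠ k → fourierT a t = 0) {x x' : Fin n → Bool}
    (hxx' : a x = a x') :
    ∑ i, a (update x i (!x i)) = ∑ i, a (update x' i (!x' i)) :=
  mul_left_cancel₀ (pow_ne_zero n two_ne_zero) <| by
    rw [two_pow_mul_sum_update_not ha, two_pow_mul_sum_update_not ha, hxx']

lemma exists_isPerfectColoring_of_factorsThrough {Col : (Fin n → Bool) → Fin 2}
    (h : FactorsThrough (fun x j => #{y | hammingDist x y = 1 ∧ Col y = j}) Col) :
    ∃ A, IsPerfectColoring Col A :=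
  ⟨extend Col _ 0, fun x j => by rw [h.extend_apply]⟩

lemma chi_eq_val_chiCol (S : Finset (Fin n → Bool)) (x : Fin n → Bool) :
    chi S x = (chiCol S x).val := by
  unfold chi chiCol; split_ifs <;> rfl

lemma card_neighbors_chiCol (S : Finset (Fin n → Bool)) (x : Fin n → Bool) (j : Fin 2) :
    (#{y | hammingDist x y = 1 ∧ chiCol S y = j} : ℚ)
      = if j = 1 then ∑ i, chi S (update x i (!x i))
        else n - ∑ i, chi S (update x i (!x i)) := by
  have hsummand : ∀ y, (if chiCol S y = j then (1 : ℚ) else 0)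
      = if j = 1 then chi S y else 1 - chi S y := by
    intro y; unfold chiCol chi; fin_cases j <;> split_ifs <;> simp_all
  rw [← filter_filter, card_filter, Nat.cast_sum, sum_hammingDist_eq_one]
  simp only [Nat.cast_ite, Nat.cast_one, Nat.cast_zero, hsummand]
  split_ifs <;> simp [sum_sub_distrib]

end BooleanCube

open BooleanCube in
theorem stmt15_general {n : ℕ} (S : Finset (Fin n → Bool)) (k : ℕ)
    (h : ∀ i : ℕ, i ≠ 0 → i ≠ k → Bmw S i = 0) :
    ∃ A : Fin 2 → Fin 2 → ℕ, IsPerfectColoring (chiCol S) A := by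
  have hspec : ∀ t, t ≠ (fun _ => false) → wt t ≠ k → fourierT (chi S) t = 0 :=
    fun t ht htk => fourierT_chi_eq_zero_of_Bmw_eq_zero (h _ (wt_eq_zero_iff.not.2 ht) htk)
  refine exists_isPerfectColoring_of_factorsThrough fun x x' hxx' => funext fun j => ?_
  have hnbr := sum_update_not_eq_of_fourierT_eq_zero hspec (x := x) (x' := x')
    (by rw [chi_eq_val_chiCol, chi_eq_val_chiCol, hxx'])
  beta_reduce
  rw [← Nat.cast_inj (R := ℚ), card_neighbors_chiCol, card_neighbors_chiCol, hnbr]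

/-- If `0̄ ∈ S` and there is `k` with `B'_i(a) = 0` for all
`i ∉ {0, k}`, then `χ^S` is a perfect 2-coloring. -/
theorem stmt15 {n : ℕ} (S : Finset (Fin n → Bool)) (h0 : (fun _ => false) ∈ S) (k : ℕ)
    (h : ∀ i : ℕ, i ≠ 0 → i ≠ k → Bmw S i = 0) :
    ∃ A : Fin 2 → Fin 2 → ℕ, IsPerfectColoring (chiCol S) A :=
  stmt15_general S k h
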